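/- For every w ∈ ℂ with |w| < R one has e_q(w) ≠ 0. Consequently, for all z, z' ∈ ℂ with |z|² < R and |z'|² < R, the overlap of the two q-coherent states is nonzero: ⟨c_{z'}, c_z⟩ ≠ 0; in particular no two q-coherent states are orthogonal. -/

import Mathlib

open scoped BigOperators

/-- The q-number `[n]_q = (1 - q^n)/(1 - q)`. -/
noncomputable def qnum (q : ℝ) (n : ℕ) : ℝ := (1 - q ^ n) / (1 - q)

/-- The q-factorial `[n]_q! = [1]_q [2]_q ⋯ [n]_q`, with `[0]_q! = 1`. -/
noncomputable def qfact (q : ℝ) : ℕ → ℝ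
  | 0 => 1
  | n + 1 => qfact q n * qnum q (n + 1)

/-- The complex q-exponential `e_q(w) = ∑ w^n/[n]_q!`. -/
noncomputable def qexC (q : ℝ) (w : ℂ) : ℂ := ∑' n : ℕ, w ^ n / (qfact q n : ℂ)

/-- The real q-exponential `e_q(x) = ∑ x^n/[n]_q!`. -/
noncomputable def qexR (q : ℝ) (x : ℝ) : ℝ := ∑' n : ℕ, x ^ n / qfact q n

/-- The normalized q-coherent state `c_z(n) = e_q(|z|²)^{-1/2} z^n / √([n]_q!)`. -/
noncomputable def coh (q : ℝ) (z : ℂ) (n : ℕ) : ℂ :=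
  (((Real.sqrt (qexR q (‖z‖ ^ 2)))⁻¹ : ℝ) : ℂ) * z ^ n / ((Real.sqrt (qfact q n) : ℝ) : ℂ)

/-!
A zero of `e_q` propagates along the q-difference equation
`e_q(q w) = (1 - (1 - q) w) e_q(w)` to every point `q^N w`; but `e_q(q^N w) → e_q(0) = 1` by
dominated convergence, a contradiction. The overlap `⟨c_{z'}, c_z⟩` is a nonzero real multiple of
`e_q(conj z' · z)`, and `|conj z' · z| ≤ max(|z|², |z'|²) < R`.
-/

open Filter Topology

section

variable {q : ℝ}

lemma one_sub_mul_qnum (hq : q ≠ 1) (n : ℕ) : (1 - q) * qnum q n = 1 - q ^ n :=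
  mul_div_cancel₀ _ (sub_ne_zero.mpr hq.symm)

lemma qnum_succ_pos (hq : |q| < 1) (n : ℕ) : 0 < qnum q (n + 1) := by
  have hq1 : 0 < 1 - q := by linarith [(abs_lt.mp hq).2]
  have hpow : q ^ (n + 1) < 1 := (le_abs_self _).trans_lt
    (by rw [abs_pow]; exact pow_lt_one₀ (abs_nonneg q) hq n.succ_ne_zero)
  exact div_pos (by linarith) hq1

lemma qfact_succ (n : ℕ) : qfact q (n + 1) = qfact q n * qnum q (n + 1) := rfl

lemma qfact_pos (hq : |q| < 1) : ∀ n, 0 < qfact q n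
  | 0 => one_pos
  | n + 1 => mul_pos (qfact_pos hq n) (qnum_succ_pos hq n)

lemma tendsto_qnum (hq : |q| < 1) : Tendsto (qnum q) atTop (𝓝 (1 / (1 - q))) := by
  have := ((tendsto_pow_atTop_nhds_zero_of_abs_lt_one hq).const_sub 1).div_const (1 - q)
  rwa [sub_zero] at this

lemma summable_pow_div_qfact (hq : |q| < 1) {x : ℝ} (hx0 : 0 ≤ x)
    (hx : x < 1 / (1 - q)) : Summable fun n => x ^ n / qfact q n := by
  have hq1 : 0 < 1 - q := by linarith [(abs_lt.mp hq).2]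
  -- ratio test: consecutive terms have ratio `x / [n + 1]_q → x (1 - q) < 1`
  obtain ⟨r, hxr, hr1⟩ : ∃ r, x * (1 - q) < r ∧ r < 1 :=
    exists_between (by rwa [lt_div_iff₀ hq1] at hx)
  have hr0 : 0 < r := (mul_nonneg hx0 hq1.le).trans_lt hxr
  have hlim : x / r < 1 / (1 - q) := by
    rw [div_lt_div_iff₀ hr0 hq1]; linarith
  refine summable_of_ratio_norm_eventually_le hr1 ?_
  filter_upwards [((tendsto_qnum hq).comp (tendsto_add_atTop_nat 1)).eventually
    (lt_mem_nhds hlim)] with n hn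
  have hnum := qnum_succ_pos hq n
  have hterm (k : ℕ) : 0 ≤ x ^ k / qfact q k := div_nonneg (pow_nonneg hx0 k) (qfact_pos hq k).le
  rw [Real.norm_of_nonneg (hterm _), Real.norm_of_nonneg (hterm _),
    qfact_succ, pow_succ,
    mul_div_mul_comm, mul_comm r]
  refine mul_le_mul_of_nonneg_left ?_ (hterm n)
  rw [div_le_iff₀ hnum]
  rw [Function.comp_apply, div_lt_iff₀ hr0] at hn
  linarith

lemma norm_pow_div_qfact (hq : |q| < 1) (w : ℂ) (n : ℕ) :
    ‖w ^ n / (qfact q n : ℂ)‖ = ‖w‖ ^ n / qfact q n := by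
  rw [norm_div, norm_pow, Complex.norm_real, Real.norm_of_nonneg (qfact_pos hq n).le]

lemma summable_qexC (hq : |q| < 1) {w : ℂ} (hw : ‖w‖ < 1 / (1 - q)) :
    Summable fun n => w ^ n / (qfact q n : ℂ) :=
  Summable.of_norm <| by
    simpa only [norm_pow_div_qfact hq] using summable_pow_div_qfact hq (norm_nonneg w) hw

lemma qexC_zero : qexC q 0 = 1 := by
  rw [qexC, tsum_eq_single 0 fun n hn => by simp [hn]]
  simp [qfact]

lemma norm_ofReal_pow_mul_le (hq : |q| < 1) (N : ℕ) (w : ℂ) : ‖(q : ℂ) ^ N * w‖ ≤ ‖w‖ := by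
  rw [norm_mul, norm_pow, Complex.norm_real, Real.norm_eq_abs]
  exact mul_le_of_le_one_left (norm_nonneg w) (pow_le_one₀ (abs_nonneg q) hq.le)

lemma qexC_term_succ (hq : |q| < 1) (w : ℂ) (n : ℕ) :
    ((q : ℂ) * w) ^ (n + 1) / (qfact q (n + 1) : ℂ) =
      w ^ (n + 1) / (qfact q (n + 1) : ℂ) - (1 - q) * w * (w ^ n / (qfact q n : ℂ)) := by
  have hnum : (qnum q (n + 1) : ℂ) ≠ 0 := by exact_mod_cast (qnum_succ_pos hq n).ne'
  have hfact : (qfact q n : ℂ) ≠ 0 := by exact_mod_cast (qfact_pos hq n).ne'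
  have hqnum : (1 - (q : ℂ)) * qnum q (n + 1) = 1 - (q : ℂ) ^ (n + 1) := by
    exact_mod_cast one_sub_mul_qnum (abs_lt.mp hq).2.ne (n + 1)
  rw [qfact_succ]
  push_cast
  field_simp
  linear_combination w ^ (n + 1) * hqnum

lemma qexC_q_mul (hq : |q| < 1) {w : ℂ} (hw : ‖w‖ < 1 / (1 - q)) :
    qexC q (q * w) = (1 - (1 - q) * w) * qexC q w := by
  have hs := summable_qexC hq hw
  have hqw : ‖(q : ℂ) * w‖ < 1 / (1 - q) := by
    simpa using (norm_ofReal_pow_mul_le hq 1 w).trans_lt hw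
  unfold qexC
  rw [(summable_qexC hq hqw).tsum_eq_zero_add]
  simp_rw [qexC_term_succ hq]
  rw [((summable_nat_add_iff 1).mpr hs).tsum_sub (hs.mul_left _), tsum_mul_left,
    hs.tsum_eq_zero_add]
  simp only [pow_zero, qfact, Complex.ofReal_one, div_one]
  ring

lemma tendsto_qexC_pow_mul (hq : |q| < 1) {w : ℂ} (hw : ‖w‖ < 1 / (1 - q)) :
    Tendsto (fun N : ℕ => qexC q ((q : ℂ) ^ N * w)) atTop (𝓝 1) := by
  have hpow : Tendsto (fun N : ℕ => (q : ℂ) ^ N) atTop (𝓝 0) :=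
    tendsto_pow_atTop_nhds_zero_of_norm_lt_one (by rwa [Complex.norm_real, Real.norm_eq_abs])
  have hlim := tendsto_tsum_of_dominated_convergence
    (summable_pow_div_qfact hq (norm_nonneg w) hw)
    (fun n => ((hpow.mul_const w).pow n).div_const (qfact q n : ℂ))
    (Eventually.of_forall fun N n => by
      rw [norm_pow_div_qfact hq]
      gcongr
      · exact (qfact_pos hq n).le
      · exact norm_ofReal_pow_mul_le hq N w)
  rwa [zero_mul, ← qexC, qexC_zero] at hlim

theorem qexC_ne_zero (hq : |q| < 1) {w : ℂ} (hw : ‖w‖ < 1 / (1 - q)) :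
    qexC q w ≠ 0 := by
  intro h0
  have hzero (N : ℕ) : qexC q ((q : ℂ) ^ N * w) = 0 := by
    induction N with
    | zero => simpa using h0
    | succ N ih =>
      rw [pow_succ', mul_assoc, qexC_q_mul hq ((norm_ofReal_pow_mul_le hq N w).trans_lt hw), ih,
        mul_zero]
  exact one_ne_zero <| tendsto_nhds_unique (tendsto_qexC_pow_mul hq hw) (by simp [hzero])

lemma one_le_qexR (hq : |q| < 1) {x : ℝ} (hx0 : 0 ≤ x) (hx : x < 1 / (1 - q)) :
    1 ≤ qexR q x := by
  simpa [qexR, qfact] using (summable_pow_div_qfact hq hx0 hx).le_tsum 0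
    fun n _ => div_nonneg (pow_nonneg hx0 n) (qfact_pos hq n).le

lemma tsum_conj_coh_mul_coh (hq : |q| < 1) (z z' : ℂ) :
    ∑' n, (starRingEnd ℂ) (coh q z' n) * coh q z n =
      (((Real.sqrt (qexR q (‖z'‖ ^ 2)))⁻¹ * (Real.sqrt (qexR q (‖z‖ ^ 2)))⁻¹ : ℝ) : ℂ) *
        qexC q ((starRingEnd ℂ) z' * z) := by
  rw [qexC, ← tsum_mul_left]
  congr 1 with n
  have hsq : (Real.sqrt (qfact q n) : ℂ) * Real.sqrt (qfact q n) = qfact q n := by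
    exact_mod_cast Real.mul_self_sqrt (qfact_pos hq n).le
  have hsqrt : (Real.sqrt (qfact q n) : ℂ) ≠ 0 := by
    exact_mod_cast (Real.sqrt_pos.mpr (qfact_pos hq n)).ne'
  simp only [coh, map_div₀, map_mul, map_pow, Complex.conj_ofReal]
  rw [← hsq]
  push_cast
  field_simp
  ring

end

/-- `e_q(w) ≠ 0` for every `‖w‖ < R`; consequently the overlap of any two
q-coherent states is nonzero, so no two q-coherent states are orthogonal. -/
theorem coherent_states_never_orthogonal (q : ℝ) (hq0 : 0 < q) (hq1 : q < 1) :
    (∀ w : ℂ, ‖w‖ < 1 / (1 - q) → qexC q w ≠ 0) ∧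
    (∀ z z' : ℂ, ‖z‖ ^ 2 < 1 / (1 - q) → ‖z'‖ ^ 2 < 1 / (1 - q) →
      (∑' n : ℕ, (starRingEnd ℂ) (coh q z' n) * coh q z n) ≠ 0) := by
  have hq : |q| < 1 := abs_lt.mpr ⟨by linarith, hq1⟩
  refine ⟨fun w hw => qexC_ne_zero hq hw, fun z z' hz hz' => ?_⟩
  have hnorm : ‖(starRingEnd ℂ) z' * z‖ < 1 / (1 - q) := by
    rw [norm_mul, RCLike.norm_conj]
    nlinarith [sq_nonneg (‖z'‖ - ‖z‖)]
  have hnormalization {x : ℝ} (hx0 : 0 ≤ x) (hx : x < 1 / (1 - q)) :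
      (Real.sqrt (qexR q x))⁻¹ ≠ 0 :=
    inv_ne_zero (Real.sqrt_pos.mpr (zero_lt_one.trans_le (one_le_qexR hq hx0 hx))).ne'
  rw [tsum_conj_coh_mul_coh hq]
  exact mul_ne_zero (Complex.ofReal_ne_zero.mpr (mul_ne_zero
    (hnormalization (by positivity) hz') (hnormalization (by positivity) hz)))
    (qexC_ne_zero hq hnorm)
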